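/- Suppose E : I → ℝ and z : I → V (a finite-dimensional real vector space) satisfy, for all η in an open interval I and all w ∈ V, the eigenvalue relation A_D(η)(z(η), w) = E(η)·A_W(η)(z(η), w), where A_D, A_W : I → (symmetric bilinear forms on V) are differentiable, z is differentiable, E is differentiable, and A_W(η) is positive definite with A_W(η)(z(η),z(η)) ≠ 0. Then E'(η) = [A_D'(η)(z,z) − E(η)·A_W'(η)(z,z)] / A_W(η)(z,z), where A_D', A_W' denote derivatives with z held fixed at z(η). -/

import Mathlib

/-!
Write `F s = A_D(s)(z s, z s)` and `G s = A_W(s)(z s, z s)`. Testing the eigen-relation with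
`w = z s` gives `E = F / G` near `η`, so `E` is differentiable with `E' = (F' - E G') / G`.
By the product rule, `F'` and `G'` are the partial derivatives in `s` plus the terms
`A(z', z) + A(z, z')`; symmetry and the eigen-relation tested with `w = z'` turn those of `F'`
into `E` times those of `G'`, so they cancel.
-/

open Filter Topology Module

theorem differentiableAt_clm_apply_iff {𝕜 D E F : Type*} [NontriviallyNormedField 𝕜]
    [CompleteSpace 𝕜] [NormedAddCommGroup D] [NormedSpace 𝕜 D] [NormedAddCommGroup E]
    [NormedSpace 𝕜 E] [FiniteDimensional 𝕜 E] [NormedAddCommGroup F] [NormedSpace 𝕜 F]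
    {f : D → E →L[𝕜] F} {x : D} :
    DifferentiableAt 𝕜 f x ↔ ∀ y, DifferentiableAt 𝕜 (fun x => f x y) x := by
  refine ⟨fun h y => h.clm_apply (differentiableAt_const y), fun h => ?_⟩
  let e := ((ContinuousLinearEquiv.ofFinrankEq (finrank_fin_fun 𝕜).symm).arrowCongr
    (1 : F ≃L[𝕜] F)).trans (ContinuousLinearEquiv.piRing (Fin (finrank 𝕜 E)))
  rw [← e.comp_differentiableAt_iff]
  exact differentiableAt_pi.mpr fun i => h _

section

variable {𝕜 E F G : Type*} [NontriviallyNormedField 𝕜] [CompleteSpace 𝕜]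
  [NormedAddCommGroup E] [NormedSpace 𝕜 E] [FiniteDimensional 𝕜 E]
  [NormedAddCommGroup F] [NormedSpace 𝕜 F] [FiniteDimensional 𝕜 F]
  [NormedAddCommGroup G] [NormedSpace 𝕜 G]

theorem hasDerivAt_linearMap_apply₂ {M : 𝕜 → E →ₗ[𝕜] F →ₗ[𝕜] G} {x : 𝕜 → E} {y : 𝕜 → F}
    {x' : E} {y' : F} {η : 𝕜} (hM : ∀ u w, DifferentiableAt 𝕜 (fun s => M s u w) η)
    (hx : HasDerivAt x x' η) (hy : HasDerivAt y y' η) :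
    HasDerivAt (fun s => M s (x s) (y s))
      (deriv (fun s => M s (x η) (y η)) η + M η x' (y η) + M η (x η) y') η := by
  obtain ⟨B, hBM⟩ : ∃ B : 𝕜 → E →L[𝕜] F →L[𝕜] G, ∀ s u w, B s u w = M s u w :=
    ⟨fun s => (M s).toContinuousBilinearMap, fun _ _ _ => rfl⟩
  have hBdiff : DifferentiableAt 𝕜 B η :=
    differentiableAt_clm_apply_iff.mpr fun u => differentiableAt_clm_apply_iff.mpr fun w => by
      simpa only [hBM] using hM u w
  -- not `hBdiff.hasDerivAt`: its `deriv B η` carries normed-space instances that unify with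
  -- those of `HasDerivAt B` on the space of bilinear maps only after a very costly unfolding
  obtain ⟨B', hB⟩ : ∃ B', HasDerivAt B B' η :=
    let ⟨L, hL⟩ := hBdiff
    ⟨L 1, hL.hasDerivAt⟩
  have hconst : HasDerivAt (fun s => B s (x η) (y η)) (B' (x η) (y η)) η := by
    simpa using (hB.clm_apply (hasDerivAt_const η (x η))).clm_apply (hasDerivAt_const η (y η))
  simp only [← hBM]
  rw [hconst.deriv, add_assoc]
  simpa only [add_apply, add_assoc] using (hB.clm_apply hx).clm_apply hy

theorem hasDerivAt_generalizedEigenvalue {A B : 𝕜 → E →ₗ[𝕜] E →ₗ[𝕜] 𝕜} {z : 𝕜 → E} {z' : E}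
    {μ : 𝕜 → 𝕜} {η : 𝕜} (hA : ∀ u w, DifferentiableAt 𝕜 (fun s => A s u w) η)
    (hB : ∀ u w, DifferentiableAt 𝕜 (fun s => B s u w) η)
    (hAsymm : ∀ u w, A η u w = A η w u) (hBsymm : ∀ u w, B η u w = B η w u)
    (hz : HasDerivAt z z' η) (heig : ∀ᶠ s in 𝓝 η, ∀ w, A s (z s) w = μ s * B s (z s) w)
    (hne : B η (z η) (z η) ≠ 0) :
    HasDerivAt μ ((deriv (fun s => A s (z η) (z η)) η
      - μ η * deriv (fun s => B s (z η) (z η)) η) / B η (z η) (z η)) η := by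
  have hF := hasDerivAt_linearMap_apply₂ hA hz hz
  have hG := hasDerivAt_linearMap_apply₂ hB hz hz
  have hquot : μ =ᶠ[𝓝 η] fun s => A s (z s) (z s) / B s (z s) (z s) := by
    filter_upwards [heig, hG.continuousAt.eventually_ne hne] with s hs hGs
    rw [hs, mul_div_cancel_right₀ _ hGs]
  refine ((hF.div hG hne).congr_of_eventuallyEq hquot).congr_deriv ?_
  have hη : ∀ w, A η (z η) w = μ η * B η (z η) w := heig.self_of_nhds
  rw [hAsymm z', hBsymm z', hη, hη]
  field_simp
  ring

end

theorem stmt_19_general {V : Type*} [NormedAddCommGroup V] [NormedSpace ℝ V]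
    [FiniteDimensional ℝ V]
    (a b : ℝ) (AD AW : ℝ → V →ₗ[ℝ] V →ₗ[ℝ] ℝ)
    (hADsym : ∀ η v w, AD η v w = AD η w v)
    (hAWsym : ∀ η v w, AW η v w = AW η w v)
    (hADdiff : ∀ (v w : V), ∀ η ∈ Set.Ioo a b,
      DifferentiableAt ℝ (fun s => AD s v w) η)
    (hAWdiff : ∀ (v w : V), ∀ η ∈ Set.Ioo a b,
      DifferentiableAt ℝ (fun s => AW s v w) η)
    (z : ℝ → V) (hz : ∀ η ∈ Set.Ioo a b, DifferentiableAt ℝ z η)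
    (E : ℝ → ℝ)
    (heig : ∀ η ∈ Set.Ioo a b, ∀ w : V, AD η (z η) w = E η * AW η (z η) w)
    (hzne : ∀ η ∈ Set.Ioo a b, AW η (z η) (z η) ≠ 0) :
    ∀ η ∈ Set.Ioo a b,
      deriv E η =
        (deriv (fun s => AD s (z η) (z η)) η
          - E η * deriv (fun s => AW s (z η) (z η)) η) / AW η (z η) (z η) := by
  intro η hη
  have heig_near : ∀ᶠ s in 𝓝 η, ∀ w, AD s (z s) w = E s * AW s (z s) w :=
    eventually_of_mem (Ioo_mem_nhds hη.1 hη.2) heig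
  exact (hasDerivAt_generalizedEigenvalue (fun u w => hADdiff u w η hη)
    (fun u w => hAWdiff u w η hη) (hADsym η) (hAWsym η) (hz η hη).hasDerivAt heig_near
    (hzne η hη)).deriv

/-- Hellmann–Feynman-type formula for the derivative of a
generalized eigenvalue: if `A_D(η)(z(η),w) = E(η) A_W(η)(z(η),w)` for all `w`,
then `E' = (A_D'(z,z) - E A_W'(z,z)) / A_W(z,z)`, the derivatives of the
bilinear forms being taken with `z` held fixed. -/
theorem stmt_19 {V : Type*} [NormedAddCommGroup V] [NormedSpace ℝ V]
    [FiniteDimensional ℝ V]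
    (a b : ℝ) (AD AW : ℝ → V →ₗ[ℝ] V →ₗ[ℝ] ℝ)
    (hADsym : ∀ η v w, AD η v w = AD η w v)
    (hAWsym : ∀ η v w, AW η v w = AW η w v)
    (hAWpos : ∀ η ∈ Set.Ioo a b, ∀ v : V, v ≠ 0 → 0 < AW η v v)
    (hADdiff : ∀ (v w : V), ∀ η ∈ Set.Ioo a b,
      DifferentiableAt ℝ (fun s => AD s v w) η)
    (hAWdiff : ∀ (v w : V), ∀ η ∈ Set.Ioo a b,
      DifferentiableAt ℝ (fun s => AW s v w) η)
    (z : ℝ → V) (hz : ∀ η ∈ Set.Ioo a b, DifferentiableAt ℝ z η)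
    (E : ℝ → ℝ) (hE : ∀ η ∈ Set.Ioo a b, DifferentiableAt ℝ E η)
    (heig : ∀ η ∈ Set.Ioo a b, ∀ w : V, AD η (z η) w = E η * AW η (z η) w)
    (hzne : ∀ η ∈ Set.Ioo a b, AW η (z η) (z η) ≠ 0) :
    ∀ η ∈ Set.Ioo a b,
      deriv E η =
        (deriv (fun s => AD s (z η) (z η)) η
          - E η * deriv (fun s => AW s (z η) (z η)) η) / AW η (z η) (z η) :=
  stmt_19_general a b AD AW hADsym hAWsym hADdiff hAWdiff z hz E heig hzne
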